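/- arXiv:2412.10990 — 3 statements merged into one kernel-verified Lean document; each statement's English description precedes it below -/
import Mathlib

section
/- Let Σ, p be n×n complex matrices with Σ² + p = 0 and p constant symmetric, Σ symmetric. Then for any constant symmetric matrix H₀ with L(u) := exp(uΣ) and H(u) a symmetric-matrix-valued solution of L(u)·H'(u)·L(u)ᵀ = I, the matrix S(u) = Σ + (L(u)H(u)L(u)ᵀ)⁻¹ satisfies the Sachs equation S'(u) + S(u)² + p = 0 on any interval where L(u)H(u)L(u)ᵀ is invertible. -/
open Matrix

attribute [local instance] Matrix.linftyOpNormedAddCommGroup Matrix.linftyOpNormedRing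
  Matrix.linftyOpNormedAlgebra Matrix.linftyOpNormedSpace

/-!
With `M = L H Lᵀ`, the hypotheses `L' = Σ L` and `L H' Lᵀ = 1` give the linear equation
`M' = Σ M + 1 + M Σᵀ`, so `W = M⁻¹` satisfies `W' = -M⁻¹ M' M⁻¹ = -(W Σ + W² + Σᵀ W)`.
For symmetric `Σ` this is `W' = -((Σ + W)² - Σ²)`, which is the Sachs equation for `S = Σ + W`
because `Σ² = -p`.
-/

variable {𝕜 : Type*} [RCLike 𝕜] {m : Type*} [Fintype m]

theorem HasDerivAt.matrix_transpose {n : Type*} [Fintype n] {A : ℝ → Matrix m n 𝕜}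
    {A' : Matrix m n 𝕜} {t : ℝ} (hA : HasDerivAt A A' t) :
    HasDerivAt (fun s => (A s)ᵀ) A'ᵀ t :=
  (transposeLinearEquiv m n ℝ 𝕜).toLinearMap.toContinuousLinearMap.hasFDerivAt.comp_hasDerivAt t hA

variable [DecidableEq m]

theorem HasDerivAt.matrix_inv {M : ℝ → Matrix m m 𝕜} {M' : Matrix m m 𝕜} {t : ℝ}
    (hM : HasDerivAt M M' t) (hunit : IsUnit (M t)) :
    HasDerivAt (fun s => (M s)⁻¹) (-((M t)⁻¹ * M' * (M t)⁻¹)) t := by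
  obtain ⟨w, hw⟩ := hunit
  simp only [nonsing_inv_eq_ringInverse, ← hw, Ring.inverse_unit]
  exact (hw ▸ hasFDerivAt_ringInverse (𝕜 := ℝ) w).comp_hasDerivAt t hM

theorem hasDerivAt_mul_mul_transpose {A : Matrix m m 𝕜} {L H : ℝ → Matrix m m 𝕜}
    {H' : Matrix m m 𝕜} {t : ℝ} (hL : HasDerivAt L (A * L t) t) (hH : HasDerivAt H H' t)
    (hH' : L t * H' * (L t)ᵀ = 1) :
    HasDerivAt (fun s => L s * H s * (L s)ᵀ)
      (A * (L t * H t * (L t)ᵀ) + 1 + L t * H t * (L t)ᵀ * Aᵀ) t := by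
  refine ((hL.mul hH).mul hL.matrix_transpose).congr_deriv ?_
  rw [Pi.mul_apply, transpose_mul, ← hH']
  noncomm_ring

theorem HasDerivAt.matrix_inv_of_lyapunov {A : Matrix m m 𝕜} {M : ℝ → Matrix m m 𝕜} {t : ℝ}
    (hM : HasDerivAt M (A * M t + 1 + M t * Aᵀ) t) (hunit : IsUnit (M t)) :
    HasDerivAt (fun s => (M s)⁻¹) (-((M t)⁻¹ * A + (M t)⁻¹ ^ 2 + Aᵀ * (M t)⁻¹)) t := by
  have hdet := (isUnit_iff_isUnit_det _).mp hunit
  refine (hM.matrix_inv hunit).congr_deriv ?_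
  have hA : (M t)⁻¹ * (A * M t) * (M t)⁻¹ = (M t)⁻¹ * A := by
    rw [mul_assoc, mul_assoc, mul_nonsing_inv _ hdet, mul_one]
  have hAt : (M t)⁻¹ * (M t * Aᵀ) * (M t)⁻¹ = Aᵀ * (M t)⁻¹ := by
    rw [← mul_assoc, nonsing_inv_mul _ hdet, one_mul]
  rw [mul_add, mul_add, add_mul, add_mul, hA, hAt, mul_one, sq]

theorem stmt3_general {n : ℕ} (p Sg : Matrix (Fin n) (Fin n) ℂ)
    (hSigmasym : Sgᵀ = Sg) (hSigma : Sg ^ 2 + p = 0)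
    (L : ℝ → Matrix (Fin n) (Fin n) ℂ)
    (hL : ∀ u : ℝ, L u = NormedSpace.exp (u • Sg))
    (H H' : ℝ → Matrix (Fin n) (Fin n) ℂ)
    (hH : ∀ u, HasDerivAt H (H' u) u)
    (hH' : ∀ u, L u * H' u * (L u)ᵀ = 1)
    (I : Set ℝ)
    (hinv : ∀ u ∈ I, IsUnit (L u * H u * (L u)ᵀ))
    (S : ℝ → Matrix (Fin n) (Fin n) ℂ)
    (hS : ∀ u, S u = Sg + (L u * H u * (L u)ᵀ)⁻¹) :
    ∀ u ∈ I, HasDerivAt S (-(S u ^ 2) - p) u := by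
  have hL' : ∀ u, HasDerivAt L (Sg * L u) u := fun u => by
    rw [funext hL]
    exact hasDerivAt_exp_smul_const' Sg u
  intro u hu
  have hW := (hasDerivAt_mul_mul_transpose (hL' u) (hH u) (hH' u)).matrix_inv_of_lyapunov
    (hinv u hu)
  rw [hS u, funext hS]
  refine (hW.const_add Sg).congr_deriv ?_
  rw [hSigmasym, eq_neg_of_add_eq_zero_right hSigma]
  noncomm_ring

/-- If `Sigma` is a constant symmetric (complex) matrix with `Sigma² + p = 0`, `L u = exp (u Sigma)`,
and `H` is a symmetric-matrix-valued solution of `L u * H' u * (L u)ᵀ = 1`, then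
`S u = Sigma + (L u * H u * (L u)ᵀ)⁻¹` satisfies the Sachs equation `S' + S² + p = 0`
on any interval where `L u * H u * (L u)ᵀ` is invertible. -/
theorem stmt3 {n : ℕ} (p Sg : Matrix (Fin n) (Fin n) ℂ)
    (hpsym : pᵀ = p) (hSigmasym : Sgᵀ = Sg) (hSigma : Sg ^ 2 + p = 0)
    (L : ℝ → Matrix (Fin n) (Fin n) ℂ)
    (hL : ∀ u : ℝ, L u = NormedSpace.exp (u • Sg))
    (H H' : ℝ → Matrix (Fin n) (Fin n) ℂ)
    (hHsym : ∀ u, (H u)ᵀ = H u)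
    (hH : ∀ u, HasDerivAt H (H' u) u)
    (hH' : ∀ u, L u * H' u * (L u)ᵀ = 1)
    (I : Set ℝ) (hI : IsOpen I)
    (hinv : ∀ u ∈ I, IsUnit (L u * H u * (L u)ᵀ))
    (S : ℝ → Matrix (Fin n) (Fin n) ℂ)
    (hS : ∀ u, S u = Sg + (L u * H u * (L u)ᵀ)⁻¹) :
    ∀ u ∈ I, HasDerivAt S (-(S u ^ 2) - p) u :=
  stmt3_general p Sg hSigmasym hSigma L hL H H' hH hH' I hinv S hS
end

section
/- Let p be a constant symmetric real n×n matrix, and let c(z) = Σ_{n≥0} (−z)ⁿ/(2n)!, s(z) = Σ_{n≥0} (−z)ⁿ/(2n+1)! and T(z) = s(z)/c(z). Define S_t⁰(u) = p(t−u)·T(p(t−u)²). Then, on a neighborhood of u = t where c(p(t−u)²) is invertible, S_t⁰ satisfies the Sachs equation S' + S² + p = 0 with initial condition S_t⁰(t) = 0. -/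
open Matrix

attribute [local instance] Matrix.linftyOpNormedAddCommGroup Matrix.linftyOpNormedRing
  Matrix.linftyOpNormedAlgebra Matrix.linftyOpNormedSpace

/-- The entire function `c(z) = ∑ (-z)^n/(2n)!` applied to a matrix argument. -/
noncomputable def matC {n : ℕ} (M : Matrix (Fin n) (Fin n) ℝ) : Matrix (Fin n) (Fin n) ℝ :=
  ∑' k : ℕ, ((-1) ^ k / (Nat.factorial (2 * k)) : ℝ) • M ^ k

/-- The entire function `s(z) = ∑ (-z)^n/(2n+1)!` applied to a matrix argument. -/
noncomputable def matS {n : ℕ} (M : Matrix (Fin n) (Fin n) ℝ) : Matrix (Fin n) (Fin n) ℝ :=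
  ∑' k : ℕ, ((-1) ^ k / (Nat.factorial (2 * k + 1)) : ℝ) • M ^ k

namespace SachsAux

instance instCompl {n : ℕ} : CompleteSpace (Matrix (Fin n) (Fin n) ℝ) :=
  FiniteDimensional.complete ℝ _

variable {n : ℕ}

/-- general term of the cosine series, as a function of the time variable. -/
noncomputable def gC (p : Matrix (Fin n) (Fin n) ℝ) (t : ℝ) (k : ℕ) (x : ℝ) :
    Matrix (Fin n) (Fin n) ℝ :=
  ((-1) ^ k / (Nat.factorial (2 * k)) * (t - x) ^ (2 * k)) • p ^ k

/-- derivative of `gC`. -/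
noncomputable def gC' (p : Matrix (Fin n) (Fin n) ℝ) (t : ℝ) (k : ℕ) (x : ℝ) :
    Matrix (Fin n) (Fin n) ℝ :=
  ((-1) ^ k / (Nat.factorial (2 * k)) * (↑(2 * k) * (t - x) ^ (2 * k - 1) * (-1))) • p ^ k

/-- general term of the (√p tan-numerator) series. -/
noncomputable def gA (p : Matrix (Fin n) (Fin n) ℝ) (t : ℝ) (k : ℕ) (x : ℝ) :
    Matrix (Fin n) (Fin n) ℝ :=
  ((-1) ^ k / (Nat.factorial (2 * k + 1)) * (t - x) ^ (2 * k + 1)) • p ^ (k + 1)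

/-- derivative of `gA`. -/
noncomputable def gA' (p : Matrix (Fin n) (Fin n) ℝ) (t : ℝ) (k : ℕ) (x : ℝ) :
    Matrix (Fin n) (Fin n) ℝ :=
  ((-1) ^ k / (Nat.factorial (2 * k + 1)) * (↑(2 * k + 1) * (t - x) ^ (2 * k) * (-1))) • p ^ (k + 1)

lemma hasDerivAt_gC (p : Matrix (Fin n) (Fin n) ℝ) (t : ℝ) (k : ℕ) (x : ℝ) :
    HasDerivAt (fun y => gC p t k y) (gC' p t k x) x := by
  unfold gC gC'
  exact ((((hasDerivAt_id x).const_sub t).pow _).const_mul _).smul_const _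

lemma hasDerivAt_gA (p : Matrix (Fin n) (Fin n) ℝ) (t : ℝ) (k : ℕ) (x : ℝ) :
    HasDerivAt (fun y => gA p t k y) (gA' p t k x) x := by
  unfold gA gA'
  have := ((((hasDerivAt_id x).const_sub t).pow (2 * k + 1)).const_mul
      ((-1 : ℝ) ^ k / (Nat.factorial (2 * k + 1)))).smul_const (p ^ (k + 1))
  simp at this ⊢; exact this

lemma norm_pow_le_aux (M : Matrix (Fin n) (Fin n) ℝ) (k : ℕ) :
    ‖M ^ k‖ ≤ (1 + ‖(1 : Matrix (Fin n) (Fin n) ℝ)‖) * ‖M‖ ^ k := by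
  rcases Nat.eq_zero_or_pos k with h | h
  · subst h; rw [pow_zero, pow_zero, mul_one]
    linarith [norm_nonneg (1 : Matrix (Fin n) (Fin n) ℝ)]
  · calc ‖M ^ k‖ ≤ ‖M‖ ^ k := norm_pow_le' M h
      _ ≤ (1 + ‖(1 : Matrix (Fin n) (Fin n) ℝ)‖) * ‖M‖ ^ k := by
          nlinarith [norm_nonneg (1 : Matrix (Fin n) (Fin n) ℝ), pow_nonneg (norm_nonneg M) k]

-- factorial facts
lemma fact1 (k : ℕ) : ((Nat.factorial k : ℝ)) ≤ (Nat.factorial (2 * k)) := by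
  exact_mod_cast Nat.factorial_le (by omega)

lemma fact2 (k : ℕ) : ((Nat.factorial k : ℝ)) ≤ (Nat.factorial (2 * k + 1)) := by
  exact_mod_cast Nat.factorial_le (by omega)

lemma fact3 (k : ℕ) : ((2 * k : ℕ) : ℝ) * Nat.factorial k ≤ Nat.factorial (2 * k) := by
  rcases Nat.eq_zero_or_pos k with h | h
  · subst h; norm_num [Nat.factorial]
  · have : (2 * k) * Nat.factorial k ≤ Nat.factorial (2 * k) := by
      have h2 : 2 * k = (2 * k - 1) + 1 := by omega
      rw [h2, Nat.factorial_succ]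
      exact Nat.mul_le_mul (by omega) (Nat.factorial_le (by omega))
    exact_mod_cast this
lemma fact4 (k : ℕ) : ((2 * k + 1 : ℕ) : ℝ) * Nat.factorial k ≤ Nat.factorial (2 * k + 1) := by
  have : (2 * k + 1) * Nat.factorial k ≤ Nat.factorial (2 * k + 1) := by
    rw [Nat.factorial_succ]
    exact Nat.mul_le_mul le_rfl (Nat.factorial_le (by omega))
  exact_mod_cast this


section Bounds
variable (p : Matrix (Fin n) (Fin n) ℝ) (t : ℝ)

lemma sq_le_of_abs {x R : ℝ} (hx : |t - x| ≤ R) : (t - x) ^ 2 ≤ R ^ 2 := by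
  have h := abs_le.mp hx
  nlinarith [h.1, h.2]

lemma normC_le {x R : ℝ} (h1 : 1 ≤ R) (hx : |t - x| ≤ R) (k : ℕ) :
    ‖gC p t k x‖ ≤ (1 + ‖(1 : Matrix (Fin n) (Fin n) ℝ)‖) *
      ((R ^ 2 * max ‖p‖ 1) ^ k / Nat.factorial k) := by
  have habs1 : |(-1 : ℝ) ^ k| = 1 := by simp
  have ha : |(-1 : ℝ) ^ k / (Nat.factorial (2 * k)) * (t - x) ^ (2 * k)| ≤
      (R ^ 2) ^ k / Nat.factorial k := by
    rw [abs_mul, abs_div, habs1, abs_pow, Nat.abs_cast, pow_mul, sq_abs]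
    have h2 : (t - x) ^ 2 ≤ R ^ 2 := sq_le_of_abs t hx
    have h3 : ((t - x) ^ 2) ^ k ≤ (R ^ 2) ^ k := pow_le_pow_left₀ (sq_nonneg _) h2 k
    calc 1 / (Nat.factorial (2 * k) : ℝ) * ((t - x) ^ 2) ^ k
        = ((t - x) ^ 2) ^ k / (Nat.factorial (2 * k) : ℝ) := by ring
      _ ≤ (R ^ 2) ^ k / Nat.factorial k :=
          div_le_div₀ (by positivity) h3 (by positivity) (fact1 k)
  have hp : ‖p ^ k‖ ≤ (1 + ‖(1 : Matrix (Fin n) (Fin n) ℝ)‖) * (max ‖p‖ 1) ^ k := by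
    refine (norm_pow_le_aux p k).trans ?_
    gcongr
    exact le_max_left _ _
  rw [gC, norm_smul, Real.norm_eq_abs]
  calc |(-1 : ℝ) ^ k / (Nat.factorial (2 * k)) * (t - x) ^ (2 * k)| * ‖p ^ k‖
      ≤ ((R ^ 2) ^ k / Nat.factorial k) *
        ((1 + ‖(1 : Matrix (Fin n) (Fin n) ℝ)‖) * (max ‖p‖ 1) ^ k) :=
        mul_le_mul ha hp (norm_nonneg _) (by positivity)
    _ = (1 + ‖(1 : Matrix (Fin n) (Fin n) ℝ)‖) *
        ((R ^ 2 * max ‖p‖ 1) ^ k / Nat.factorial k) := by rw [mul_pow]; ring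

lemma normC'_le {x R : ℝ} (h1 : 1 ≤ R) (hx : |t - x| ≤ R) (k : ℕ) :
    ‖gC' p t k x‖ ≤ (1 + ‖(1 : Matrix (Fin n) (Fin n) ℝ)‖) *
      ((R ^ 2 * max ‖p‖ 1) ^ k / Nat.factorial k) := by
  have habs1 : |(-1 : ℝ) ^ k| = 1 := by simp
  have hR0 : (0 : ℝ) < R := lt_of_lt_of_le one_pos h1
  have ha : |(-1 : ℝ) ^ k / (Nat.factorial (2 * k)) *
      (↑(2 * k) * (t - x) ^ (2 * k - 1) * (-1))| ≤ (R ^ 2) ^ k / Nat.factorial k := by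
    rw [abs_mul, abs_mul, abs_mul, abs_div, habs1, abs_neg, abs_one, Nat.abs_cast,
      Nat.abs_cast, abs_pow, mul_one]
    rcases Nat.eq_zero_or_pos k with hk | hk
    · subst hk; norm_num
    · have hy : |t - x| ^ (2 * k - 1) ≤ (R ^ 2) ^ k := by
        calc |t - x| ^ (2 * k - 1) ≤ R ^ (2 * k - 1) :=
              pow_le_pow_left₀ (abs_nonneg _) hx _
          _ ≤ R ^ (2 * k) := pow_le_pow_right₀ h1 (by omega)
          _ = (R ^ 2) ^ k := by rw [← pow_mul]
      have hfac : ((2 * k : ℕ) : ℝ) / (Nat.factorial (2 * k)) ≤ 1 / Nat.factorial k := by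
        rw [div_le_div_iff₀ (by positivity) (by positivity)]
        calc ((2 * k : ℕ) : ℝ) * Nat.factorial k ≤ Nat.factorial (2 * k) := fact3 k
          _ = 1 * Nat.factorial (2 * k) := by ring
      calc 1 / (Nat.factorial (2 * k) : ℝ) * (↑(2 * k) * |t - x| ^ (2 * k - 1))
          = (((2 * k : ℕ) : ℝ) / Nat.factorial (2 * k)) * |t - x| ^ (2 * k - 1) := by ring
        _ ≤ (1 / Nat.factorial k) * (R ^ 2) ^ k :=
            mul_le_mul hfac hy (by positivity) (by positivity)
        _ = (R ^ 2) ^ k / Nat.factorial k := by ring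
  have hp : ‖p ^ k‖ ≤ (1 + ‖(1 : Matrix (Fin n) (Fin n) ℝ)‖) * (max ‖p‖ 1) ^ k := by
    refine (norm_pow_le_aux p k).trans ?_
    gcongr
    exact le_max_left _ _
  rw [gC', norm_smul, Real.norm_eq_abs]
  calc |(-1 : ℝ) ^ k / (Nat.factorial (2 * k)) *
        (↑(2 * k) * (t - x) ^ (2 * k - 1) * (-1))| * ‖p ^ k‖
      ≤ ((R ^ 2) ^ k / Nat.factorial k) *
        ((1 + ‖(1 : Matrix (Fin n) (Fin n) ℝ)‖) * (max ‖p‖ 1) ^ k) :=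
        mul_le_mul ha hp (norm_nonneg _) (by positivity)
    _ = (1 + ‖(1 : Matrix (Fin n) (Fin n) ℝ)‖) *
        ((R ^ 2 * max ‖p‖ 1) ^ k / Nat.factorial k) := by rw [mul_pow]; ring

lemma normA_le {x R : ℝ} (h1 : 1 ≤ R) (hx : |t - x| ≤ R) (k : ℕ) :
    ‖gA p t k x‖ ≤ (R * ‖p‖) * ((R ^ 2 * max ‖p‖ 1) ^ k / Nat.factorial k) := by
  have habs1 : |(-1 : ℝ) ^ k| = 1 := by simp
  have hR0 : (0 : ℝ) < R := lt_of_lt_of_le one_pos h1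
  have ha : |(-1 : ℝ) ^ k / (Nat.factorial (2 * k + 1)) * (t - x) ^ (2 * k + 1)| ≤
      R * (R ^ 2) ^ k / Nat.factorial k := by
    rw [abs_mul, abs_div, habs1, abs_pow, Nat.abs_cast]
    have hy : |t - x| ^ (2 * k + 1) ≤ R * (R ^ 2) ^ k := by
      calc |t - x| ^ (2 * k + 1) ≤ R ^ (2 * k + 1) := pow_le_pow_left₀ (abs_nonneg _) hx _
        _ = R * (R ^ 2) ^ k := by rw [pow_succ, ← pow_mul]; ring
    calc 1 / (Nat.factorial (2 * k + 1) : ℝ) * |t - x| ^ (2 * k + 1)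
        = |t - x| ^ (2 * k + 1) / (Nat.factorial (2 * k + 1) : ℝ) := by ring
      _ ≤ (R * (R ^ 2) ^ k) / Nat.factorial k :=
          div_le_div₀ (by positivity) hy (by positivity) (fact2 k)
      _ = R * (R ^ 2) ^ k / Nat.factorial k := by ring
  have hp : ‖p ^ (k + 1)‖ ≤ ‖p‖ * (max ‖p‖ 1) ^ k := by
    calc ‖p ^ (k + 1)‖ ≤ ‖p‖ ^ (k + 1) := norm_pow_le' p k.succ_pos
      _ = ‖p‖ * ‖p‖ ^ k := by rw [pow_succ]; ring
      _ ≤ ‖p‖ * (max ‖p‖ 1) ^ k := by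
          gcongr
          exact le_max_left _ _
  rw [gA, norm_smul, Real.norm_eq_abs]
  calc |(-1 : ℝ) ^ k / (Nat.factorial (2 * k + 1)) * (t - x) ^ (2 * k + 1)| * ‖p ^ (k + 1)‖
      ≤ (R * (R ^ 2) ^ k / Nat.factorial k) * (‖p‖ * (max ‖p‖ 1) ^ k) :=
        mul_le_mul ha hp (norm_nonneg _) (by positivity)
    _ = (R * ‖p‖) * ((R ^ 2 * max ‖p‖ 1) ^ k / Nat.factorial k) := by rw [mul_pow]; ring

lemma normA'_le {x R : ℝ} (h1 : 1 ≤ R) (hx : |t - x| ≤ R) (k : ℕ) :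
    ‖gA' p t k x‖ ≤ ‖p‖ * ((R ^ 2 * max ‖p‖ 1) ^ k / Nat.factorial k) := by
  have habs1 : |(-1 : ℝ) ^ k| = 1 := by simp
  have ha : |(-1 : ℝ) ^ k / (Nat.factorial (2 * k + 1)) *
      (↑(2 * k + 1) * (t - x) ^ (2 * k) * (-1))| ≤ (R ^ 2) ^ k / Nat.factorial k := by
    rw [abs_mul, abs_mul, abs_mul, abs_div, habs1, abs_neg, abs_one, Nat.abs_cast,
      Nat.abs_cast, abs_pow, mul_one]
    have hy : |t - x| ^ (2 * k) ≤ (R ^ 2) ^ k := by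
      calc |t - x| ^ (2 * k) ≤ R ^ (2 * k) := pow_le_pow_left₀ (abs_nonneg _) hx _
        _ = (R ^ 2) ^ k := by rw [← pow_mul]
    have hfac : ((2 * k + 1 : ℕ) : ℝ) / (Nat.factorial (2 * k + 1)) ≤ 1 / Nat.factorial k := by
      rw [div_le_div_iff₀ (by positivity) (by positivity)]
      calc ((2 * k + 1 : ℕ) : ℝ) * Nat.factorial k ≤ Nat.factorial (2 * k + 1) := fact4 k
        _ = 1 * Nat.factorial (2 * k + 1) := by ring
    calc 1 / (Nat.factorial (2 * k + 1) : ℝ) * (↑(2 * k + 1) * |t - x| ^ (2 * k))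
        = (((2 * k + 1 : ℕ) : ℝ) / Nat.factorial (2 * k + 1)) * |t - x| ^ (2 * k) := by
          push_cast; ring
      _ ≤ (1 / Nat.factorial k) * (R ^ 2) ^ k :=
          mul_le_mul hfac hy (by positivity) (by positivity)
      _ = (R ^ 2) ^ k / Nat.factorial k := by ring
  have hp : ‖p ^ (k + 1)‖ ≤ ‖p‖ * (max ‖p‖ 1) ^ k := by
    calc ‖p ^ (k + 1)‖ ≤ ‖p‖ ^ (k + 1) := norm_pow_le' p k.succ_pos
      _ = ‖p‖ * ‖p‖ ^ k := by rw [pow_succ]; ring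
      _ ≤ ‖p‖ * (max ‖p‖ 1) ^ k := by
          gcongr
          exact le_max_left _ _
  rw [gA', norm_smul, Real.norm_eq_abs]
  calc |(-1 : ℝ) ^ k / (Nat.factorial (2 * k + 1)) *
        (↑(2 * k + 1) * (t - x) ^ (2 * k) * (-1))| * ‖p ^ (k + 1)‖
      ≤ ((R ^ 2) ^ k / Nat.factorial k) * (‖p‖ * (max ‖p‖ 1) ^ k) :=
        mul_le_mul ha hp (norm_nonneg _) (by positivity)
    _ = ‖p‖ * ((R ^ 2 * max ‖p‖ 1) ^ k / Nat.factorial k) := by rw [mul_pow]; ring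

lemma summable_bound (c0 r : ℝ) (f : ℕ → Matrix (Fin n) (Fin n) ℝ)
    (hb : ∀ k, ‖f k‖ ≤ c0 * (r ^ k / Nat.factorial k)) : Summable f :=
  Summable.of_norm_bounded ((Real.summable_pow_div_factorial r).mul_left c0) hb

lemma summable_gC (x : ℝ) : Summable (fun k => gC p t k x) :=
  summable_bound _ _ _ fun k =>
    normC_le p t (R := |t - x| + 1) (by linarith [abs_nonneg (t - x)]) (by linarith) k

lemma summable_gC' (x : ℝ) : Summable (fun k => gC' p t k x) :=
  summable_bound _ _ _ fun k =>
    normC'_le p t (R := |t - x| + 1) (by linarith [abs_nonneg (t - x)]) (by linarith) k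

lemma summable_gA (x : ℝ) : Summable (fun k => gA p t k x) :=
  summable_bound _ _ _ fun k =>
    normA_le p t (R := |t - x| + 1) (by linarith [abs_nonneg (t - x)]) (by linarith) k

lemma summable_gA' (x : ℝ) : Summable (fun k => gA' p t k x) :=
  summable_bound _ _ _ fun k =>
    normA'_le p t (R := |t - x| + 1) (by linarith [abs_nonneg (t - x)]) (by linarith) k

end Bounds

section Series
variable (p : Matrix (Fin n) (Fin n) ℝ) (t : ℝ)

lemma summable_series (M : Matrix (Fin n) (Fin n) ℝ) (a : ℕ → ℝ) (r : ℝ)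
    (ha : ∀ k, |a k| ≤ r ^ k / Nat.factorial k) :
    Summable (fun k => a k • M ^ k) := by
  refine summable_bound (1 + ‖(1 : Matrix (Fin n) (Fin n) ℝ)‖) (r * ‖M‖) _ fun k => ?_
  have hr : 0 ≤ r ^ k / Nat.factorial k := le_trans (abs_nonneg _) (ha k)
  rw [norm_smul, Real.norm_eq_abs, mul_pow]
  calc |a k| * ‖M ^ k‖
      ≤ (r ^ k / Nat.factorial k) * ((1 + ‖(1 : Matrix (Fin n) (Fin n) ℝ)‖) * ‖M‖ ^ k) :=
        mul_le_mul (ha k) (norm_pow_le_aux M k) (norm_nonneg _) (by positivity)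
    _ = (1 + ‖(1 : Matrix (Fin n) (Fin n) ℝ)‖) * (r ^ k * ‖M‖ ^ k / Nat.factorial k) := by ring

lemma summable_matCser (M : Matrix (Fin n) (Fin n) ℝ) :
    Summable (fun k : ℕ => ((-1) ^ k / (Nat.factorial (2 * k)) : ℝ) • M ^ k) := by
  refine summable_series M _ 1 fun k => ?_
  rw [abs_div, abs_pow, abs_neg, abs_one, one_pow, Nat.abs_cast]
  exact div_le_div₀ (by positivity) le_rfl (by positivity) (fact1 k)

lemma summable_matSser (M : Matrix (Fin n) (Fin n) ℝ) :
    Summable (fun k : ℕ => ((-1) ^ k / (Nat.factorial (2 * k + 1)) : ℝ) • M ^ k) := by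
  refine summable_series M _ 1 fun k => ?_
  rw [abs_div, abs_pow, abs_neg, abs_one, one_pow, Nat.abs_cast]
  exact div_le_div₀ (by positivity) le_rfl (by positivity) (fact2 k)

lemma eq1 (u : ℝ) : matC ((t - u) ^ 2 • p) = ∑' k, gC p t k u := by
  unfold matC gC
  exact tsum_congr fun k => by rw [smul_pow, smul_smul, ← pow_mul]

lemma eq1s (u : ℝ) :
    matS ((t - u) ^ 2 • p) =
      ∑' k, ((-1) ^ k / (Nat.factorial (2 * k + 1)) * (t - u) ^ (2 * k) : ℝ) • p ^ k := by
  unfold matS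
  exact tsum_congr fun k => by rw [smul_pow, smul_smul, ← pow_mul]

lemma summable_matSser' (u : ℝ) :
    Summable (fun k : ℕ =>
      ((-1) ^ k / (Nat.factorial (2 * k + 1)) * (t - u) ^ (2 * k) : ℝ) • p ^ k) := by
  refine summable_series p _ ((t - u) ^ 2) fun k => ?_
  rw [abs_mul, abs_div, abs_pow, abs_neg, abs_one, one_pow, Nat.abs_cast, abs_pow, pow_mul,
    sq_abs]
  calc 1 / (Nat.factorial (2 * k + 1) : ℝ) * ((t - u) ^ 2) ^ k
      = ((t - u) ^ 2) ^ k / (Nat.factorial (2 * k + 1) : ℝ) := by ring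
    _ ≤ ((t - u) ^ 2) ^ k / Nat.factorial k :=
        div_le_div₀ (by positivity) le_rfl (by positivity) (fact2 k)

lemma eq2 (u : ℝ) :
    ((t - u) • p) * matS ((t - u) ^ 2 • p) = ∑' k, gA p t k u := by
  rw [eq1s, smul_mul_assoc]
  have hsum := summable_matSser' p t u
  rw [← (hsum.tsum_mul_left p), ← (hsum.mul_left p).tsum_const_smul (t - u)]
  exact tsum_congr fun k => by
    rw [mul_smul_comm, smul_smul, ← pow_succ', gA, pow_succ]
    ring_nf

lemma eq3 (u : ℝ) : ∑' k, gC' p t k u = ∑' k, gA p t k u := by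
  rw [(summable_gC' p t u).tsum_eq_zero_add]
  have h0 : gC' p t 0 u = 0 := by simp [gC']
  rw [h0, zero_add]
  refine tsum_congr fun k => ?_
  show gC' p t (k + 1) u = gA p t k u
  unfold gC' gA
  have hexp : 2 * (k + 1) - 1 = 2 * k + 1 := by omega
  rw [hexp]
  congr 1
  have hfac : ((2 * (k + 1)).factorial : ℝ) = (2 * (k : ℝ) + 2) * ((2 * k + 1).factorial) := by
    have h2 : 2 * (k + 1) = (2 * k + 1) + 1 := by omega
    rw [h2, Nat.factorial_succ]
    push_cast
    ring
  have hpos : ((2 * k + 1).factorial : ℝ) > 0 := by positivity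
  rw [hfac, pow_succ]
  push_cast
  field_simp

lemma eq4 (u : ℝ) : ∑' k, gA' p t k u = -(p * matC ((t - u) ^ 2 • p)) := by
  rw [eq1]
  have hsum : Summable (fun k => gC p t k u) := summable_gC p t u
  rw [← hsum.tsum_mul_left p, ← tsum_neg]
  refine tsum_congr fun k => ?_
  unfold gA' gC
  rw [mul_smul_comm, ← pow_succ', ← neg_smul]
  congr 1
  have hfac : ((2 * k + 1).factorial : ℝ) = (2 * (k : ℝ) + 1) * ((2 * k).factorial) := by
    rw [Nat.factorial_succ]
    push_cast
    ring
  have hpos : ((2 * k).factorial : ℝ) > 0 := by positivity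
  rw [hfac]
  push_cast
  field_simp

lemma abs_near (u y : ℝ) (hy : y ∈ Metric.ball u 1) : |t - y| ≤ |t - u| + 1 := by
  have hd := Metric.mem_ball.mp hy
  rw [Real.dist_eq] at hd
  calc |t - y| = |(t - u) + (u - y)| := by ring_nf
    _ ≤ |t - u| + |u - y| := abs_add_le _ _
    _ ≤ |t - u| + 1 := by
        have : |u - y| = |y - u| := abs_sub_comm u y
        linarith [le_of_lt hd, this ▸ le_of_lt hd]

lemma derivC (u : ℝ) :
    HasDerivAt (fun x => matC ((t - x) ^ 2 • p))
      (((t - u) • p) * matS ((t - u) ^ 2 • p)) u := by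
  have hR1 : (1 : ℝ) ≤ |t - u| + 1 := by linarith [abs_nonneg (t - u)]
  have key : HasDerivAt (fun x => ∑' k, gC p t k x) (∑' k, gC' p t k u) u := by
    refine hasDerivAt_tsum_of_isPreconnected
      (u := fun k => (1 + ‖(1 : Matrix (Fin n) (Fin n) ℝ)‖) *
        (((|t - u| + 1) ^ 2 * max ‖p‖ 1) ^ k / Nat.factorial k))
      ((Real.summable_pow_div_factorial _).mul_left _)
      Metric.isOpen_ball ((convex_ball u 1).isPreconnected)
      (fun k y _ => hasDerivAt_gC p t k y)
      (fun k y hy => normC'_le p t hR1 (abs_near t u y hy) k)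
      (Metric.mem_ball_self one_pos) (summable_gC p t u) (Metric.mem_ball_self one_pos)
  have hfun : (fun x => matC ((t - x) ^ 2 • p)) = fun x => ∑' k, gC p t k x :=
    funext fun x => eq1 p t x
  have hder : (∑' k, gC' p t k u) = ((t - u) • p) * matS ((t - u) ^ 2 • p) :=
    (eq3 p t u).trans (eq2 p t u).symm
  rw [hfun]
  exact hder ▸ key

lemma derivA (u : ℝ) :
    HasDerivAt (fun x => ((t - x) • p) * matS ((t - x) ^ 2 • p))
      (-(p * matC ((t - u) ^ 2 • p))) u := by
  have hR1 : (1 : ℝ) ≤ |t - u| + 1 := by linarith [abs_nonneg (t - u)]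
  have key : HasDerivAt (fun x => ∑' k, gA p t k x) (∑' k, gA' p t k u) u := by
    refine hasDerivAt_tsum_of_isPreconnected
      (u := fun k => ‖p‖ * (((|t - u| + 1) ^ 2 * max ‖p‖ 1) ^ k / Nat.factorial k))
      ((Real.summable_pow_div_factorial _).mul_left _)
      Metric.isOpen_ball ((convex_ball u 1).isPreconnected)
      (fun k y _ => hasDerivAt_gA p t k y)
      (fun k y hy => normA'_le p t hR1 (abs_near t u y hy) k)
      (Metric.mem_ball_self one_pos) (summable_gA p t u) (Metric.mem_ball_self one_pos)
  have hfun : (fun x => ((t - x) • p) * matS ((t - x) ^ 2 • p)) = fun x => ∑' k, gA p t k x :=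
    funext fun x => eq2 p t x
  rw [hfun]
  exact (eq4 p t u) ▸ key

end Series

end SachsAux

open SachsAux

/-- For constant symmetric real `p`, the matrix function
`S_t⁰(u) = p(t-u) · T(p(t-u)²)`, with `T = s/c`, solves the Sachs equation
`S' + S² + p = 0` with `S_t⁰(t) = 0`, on a neighborhood of `t` where `c(p(t-u)²)`
is invertible. -/
theorem stmt4 {n : ℕ} (p : Matrix (Fin n) (Fin n) ℝ) (hp : pᵀ = p) (t : ℝ)
    (S : ℝ → Matrix (Fin n) (Fin n) ℝ)
    (hS : ∀ u : ℝ, S u = ((t - u) • p) * matS ((t - u) ^ 2 • p) * (matC ((t - u) ^ 2 • p))⁻¹)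
    (V : Set ℝ) (hV : V ∈ nhds t) (hVopen : IsOpen V)
    (hinv : ∀ u ∈ V, IsUnit (matC ((t - u) ^ 2 • p))) :
    S t = 0 ∧ ∀ u ∈ V, HasDerivAt S (-(S u ^ 2) - p) u := by
  constructor
  · rw [hS t]
    simp
  · intro u hu
    set Cu := matC ((t - u) ^ 2 • p) with hCu_def
    set Au := ((t - u) • p) * matS ((t - u) ^ 2 • p) with hAu_def
    have hCunit : IsUnit Cu := hinv u hu
    have hCu1 : Cu * Cu⁻¹ = 1 :=
      Matrix.mul_nonsing_inv Cu ((Matrix.isUnit_iff_isUnit_det Cu).mp hCunit)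
    have hC : HasDerivAt (fun x => matC ((t - x) ^ 2 • p)) Au u := derivC p t u
    obtain ⟨w, hw⟩ := hCunit
    have hwinv : (↑w⁻¹ : Matrix (Fin n) (Fin n) ℝ) = Cu⁻¹ := by
      rw [Matrix.coe_units_inv, hw]
    have h1 : HasFDerivAt (Ring.inverse : Matrix (Fin n) (Fin n) ℝ → _)
        (-ContinuousLinearMap.mulLeftRight ℝ _ ↑w⁻¹ ↑w⁻¹) Cu :=
      hw ▸ hasFDerivAt_ringInverse w
    have h2 : HasDerivAt (fun x => Ring.inverse (matC ((t - x) ^ 2 • p)))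
        ((-ContinuousLinearMap.mulLeftRight ℝ _ ↑w⁻¹ ↑w⁻¹) Au) u :=
      by have := h1.comp_hasDerivAt u hC; exact this
    have hval : ((-ContinuousLinearMap.mulLeftRight ℝ _ ↑w⁻¹ ↑w⁻¹) Au :
        Matrix (Fin n) (Fin n) ℝ) = -(Cu⁻¹ * Au * Cu⁻¹) := by
      rw [ContinuousLinearMap.neg_apply, ContinuousLinearMap.mulLeftRight_apply, hwinv]
    have hinvDeriv : HasDerivAt (fun x => (matC ((t - x) ^ 2 • p))⁻¹)
        (-(Cu⁻¹ * Au * Cu⁻¹)) u := by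
      have hfun : (fun x => (matC ((t - x) ^ 2 • p))⁻¹) =
          fun x => Ring.inverse (matC ((t - x) ^ 2 • p)) :=
        funext fun x => Matrix.nonsing_inv_eq_ringInverse _
      rw [hfun]
      exact hval ▸ h2
    have hA : HasDerivAt (fun x => ((t - x) • p) * matS ((t - x) ^ 2 • p)) (-(p * Cu)) u :=
      derivA p t u
    have hprod := hA.mul hinvDeriv
    have hfunS : S = fun x => ((t - x) • p) * matS ((t - x) ^ 2 • p) *
        (matC ((t - x) ^ 2 • p))⁻¹ := funext hS
    rw [hfunS]
    refine HasDerivAt.congr_deriv hprod ?_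
    symm
    show -((Au * Cu⁻¹) ^ 2) - p = -(p * Cu) * Cu⁻¹ + Au * -(Cu⁻¹ * Au * Cu⁻¹)
    rw [pow_two, Matrix.neg_mul, mul_assoc p Cu Cu⁻¹, hCu1, mul_one, Matrix.mul_neg]
    noncomm_ring
end

section
/- Let Σ be a constant symmetric complex n×n matrix with Σ² + p = 0 (p constant symmetric), and let S₀ be a symmetric complex matrix with S₀ − Σ invertible. Then S(u) = Σ + [exp(uΣ)·(S₀−Σ)⁻¹·exp(uΣ) + uE(2uΣ)]⁻¹ solves the Sachs equation S' + S² + p = 0 with S(0) = S₀, on a neighborhood of u = 0 where the bracketed matrix is invertible. Here E is the entire function with zE(z) = eᶻ − 1. -/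
open Matrix

attribute [local instance] Matrix.linftyOpNormedAddCommGroup Matrix.linftyOpNormedRing
  Matrix.linftyOpNormedAlgebra Matrix.linftyOpNormedSpace

/-- The entire function `E` with `zE(z) = eᶻ - 1`, i.e. `E(z) = ∑ zᵏ/(k+1)!`,
applied to a matrix argument. -/
noncomputable def matE {n : ℕ} (M : Matrix (Fin n) (Fin n) ℂ) : Matrix (Fin n) (Fin n) ℂ :=
  ∑' k : ℕ, ((Nat.factorial (k + 1) : ℂ)⁻¹) • M ^ k

/-
Writing `S = Σ + K⁻¹`, the Sachs equation becomes the linear equation `K' = ΣK + KΣ + 1`: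
indeed `(K⁻¹)' = -K⁻¹K'K⁻¹ = -(K⁻¹Σ + ΣK⁻¹ + K⁻²)`, so `S' = Σ² - S² = -S² - p`.
The linear equation holds for `K(u) = exp(uΣ) A₀ exp(uΣ) + u E(2uΣ)` because
`(u E(2uΣ))' = exp(2uΣ) = 2Σ · u E(2uΣ) + 1`; this is seen without dividing by `Σ` by reading
`u E(uA)` off as the corner entry of `exp (u • !![A, 1; 0, 0])`. Finally `K(0) = (S₀ - Σ)⁻¹`.
-/

open NormedSpace

theorem HasDerivAt.riccati_const_add_ringInverse {R : Type*} [NormedRing R] [NormedAlgebra ℝ R]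
    [CompleteSpace R] {K : ℝ → R} {σ : R} {u : ℝ}
    (hK : HasDerivAt K (σ * K u + K u * σ + 1) u) (hu : IsUnit (K u)) :
    HasDerivAt (fun v => σ + Ring.inverse (K v)) (σ ^ 2 - (σ + Ring.inverse (K u)) ^ 2) u := by
  obtain ⟨U, hU⟩ := hu
  have hinv : HasFDerivAt Ring.inverse _ (K u) := hU ▸ hasFDerivAt_ringInverse (𝕜 := ℝ) U
  replace hinv := hinv.comp_hasDerivAt u hK
  refine (hinv.const_add σ).congr_deriv ?_
  rw [← hU, Ring.inverse_unit]
  simp only [_root_.neg_apply, ContinuousLinearMap.mulLeftRight_apply]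
  calc -(↑U⁻¹ * (σ * ↑U + ↑U * σ + 1) * ↑U⁻¹)
      = -(↑U⁻¹ * σ * (↑U * ↑U⁻¹) + (↑U⁻¹ * ↑U) * σ * ↑U⁻¹ + ↑U⁻¹ * ↑U⁻¹) := by noncomm_ring
    _ = σ ^ 2 - (σ + ↑U⁻¹) ^ 2 := by rw [Units.mul_inv, Units.inv_mul]; noncomm_ring

def Matrix.entryCLM {m k R α : Type*} [Semiring R] [AddCommMonoid α] [Module R α]
    [TopologicalSpace α] (i : m) (j : k) : Matrix m k α →L[R] α :=
  ⟨entryLinearMap R α i j, continuous_apply_apply i j⟩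

section

variable {n : ℕ}

theorem summable_matE_series (M : Matrix (Fin n) (Fin n) ℂ) :
    Summable fun k : ℕ => ((Nat.factorial (k + 1) : ℂ)⁻¹) • M ^ k := by
  refine .of_norm_bounded (norm_expSeries_summable' (𝕂 := ℂ) M) fun k => ?_
  rw [norm_smul, norm_smul]
  gcongr
  simp only [norm_inv, Complex.norm_natCast]
  exact inv_anti₀ (by positivity) (mod_cast Nat.factorial_le k.le_succ)

theorem Commute.matE {A M : Matrix (Fin n) (Fin n) ℂ} (h : Commute A M) : Commute A (matE M) :=
  Commute.tsum_right A fun k => (h.pow_right k).smul_right _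

/-- `exp (u • matEBlock A) = !![exp (u • A), u • matE (u • A); 0, 1]`. -/
def matEBlock (A : Matrix (Fin n) (Fin n) ℂ) : Matrix (Fin 2) (Fin 2) (Matrix (Fin n) (Fin n) ℂ) :=
  !![A, 1; 0, 0]

theorem matEBlock_pow_succ (A : Matrix (Fin n) (Fin n) ℂ) (k : ℕ) :
    matEBlock A ^ (k + 1) = !![A ^ (k + 1), A ^ k; 0, 0] := by
  induction k with
  | zero => simp [matEBlock]
  | succ k ih => rw [pow_succ, ih, matEBlock, mul_fin_two]; simp [pow_succ]

theorem hasSum_exp_smul_apply {m : Type*} [Fintype m] [DecidableEq m]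
    (B : Matrix m m (Matrix (Fin n) (Fin n) ℂ)) (u : ℝ) (i j : m) :
    HasSum (fun k : ℕ => (k.factorial : ℝ)⁻¹ • u ^ k • (B ^ k) i j) (exp (u • B) i j) := by
  have h := (exp_series_hasSum_exp' (𝕂 := ℝ) (u • B)).mapL (entryCLM (R := ℝ) i j)
  simp only [smul_pow] at h
  exact h

theorem exp_smul_matEBlock_one_one (A : Matrix (Fin n) (Fin n) ℂ) (u : ℝ) :
    exp (u • matEBlock A) 1 1 = 1 := by
  refine (hasSum_exp_smul_apply _ u 1 1).unique ?_
  convert hasSum_single 0 fun k hk => ?_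
  · simp
  · obtain ⟨k, rfl⟩ := Nat.exists_eq_succ_of_ne_zero hk
    simp [matEBlock_pow_succ]

theorem exp_smul_matEBlock_zero_one (A : Matrix (Fin n) (Fin n) ℂ) (u : ℝ) :
    exp (u • matEBlock A) 0 1 = u • matE (u • A) := by
  refine (hasSum_exp_smul_apply _ u 0 1).unique ?_
  rw [← hasSum_nat_add_iff' 1]
  have hf0 : (matEBlock A ^ 0) 0 1 = 0 := by simp
  have hterm : (fun k : ℕ => ((k + 1).factorial : ℝ)⁻¹ • u ^ (k + 1) • (matEBlock A ^ (k + 1)) 0 1)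
      = fun k => u • (((k + 1).factorial : ℂ)⁻¹ • (u • A) ^ k) := by
    ext1 k
    rw [matEBlock_pow_succ, smul_pow]
    simp only [of_apply, cons_val', cons_val_zero, cons_val_one, empty_val', cons_val_fin_one,
      ← Complex.coe_smul, smul_smul]
    congr 1
    push_cast
    ring
  simp only [Finset.sum_range_one, hf0, smul_zero, sub_zero, hterm]
  exact (summable_matE_series (u • A)).hasSum.const_smul u

theorem hasDerivAt_smul_matE (A : Matrix (Fin n) (Fin n) ℂ) (u : ℝ) :
    HasDerivAt (fun v : ℝ => v • matE (v • A)) (A * (u • matE (u • A)) + 1) u := by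
  have h := (entryCLM (R := ℝ) 0 1).hasFDerivAt.comp_hasDerivAt u
    (hasDerivAt_exp_smul_const' (𝕂 := ℝ) (matEBlock A) u)
  have hval : entryCLM (R := ℝ) 0 1 (matEBlock A * exp (u • matEBlock A))
      = A * (u • matE (u • A)) + 1 := by
    change (matEBlock A * exp (u • matEBlock A)) 0 1 = _
    rw [mul_apply, Fin.sum_univ_two, exp_smul_matEBlock_zero_one, exp_smul_matEBlock_one_one]
    simp [matEBlock]
  exact (h.congr_deriv hval).congr_of_eventuallyEq
    (.of_forall fun v => (exp_smul_matEBlock_zero_one A v).symm)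

noncomputable def sachsK (σ A₀ : Matrix (Fin n) (Fin n) ℂ) (u : ℝ) : Matrix (Fin n) (Fin n) ℂ :=
  exp (u • σ) * A₀ * exp (u • σ) + u • matE ((2 * u) • σ)

theorem sachsK_zero (σ A₀ : Matrix (Fin n) (Fin n) ℂ) : sachsK σ A₀ 0 = A₀ := by
  simp [sachsK]

theorem hasDerivAt_sachsK (σ A₀ : Matrix (Fin n) (Fin n) ℂ) (u : ℝ) :
    HasDerivAt (sachsK σ A₀) (σ * sachsK σ A₀ u + sachsK σ A₀ u * σ + 1) u := by
  set g := u • matE ((2 * u) • σ) with hg_def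
  have hg : HasDerivAt (fun v : ℝ => v • matE ((2 * v) • σ)) (σ * g + g * σ + 1) u := by
    have h := hasDerivAt_smul_matE ((2 : ℝ) • σ) u
    simp only [smul_smul, mul_comm _ (2 : ℝ)] at h
    have hσg : Commute σ g := (((Commute.refl σ).smul_right (2 * u)).matE).smul_right u
    convert h using 1
    rw [← hσg.eq, smul_mul_assoc, two_smul]
  have hexp : HasDerivAt (fun v : ℝ => exp (v • σ)) (σ * exp (u • σ)) u :=
    hasDerivAt_exp_smul_const' σ u
  have hexp' : HasDerivAt (fun v : ℝ => exp (v • σ)) (exp (u • σ) * σ) u :=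
    hasDerivAt_exp_smul_const σ u
  clear_value g
  refine (((hexp.mul_const A₀).mul hexp').add hg).congr_deriv ?_
  rw [sachsK, ← hg_def]
  simp only [mul_add, add_mul, mul_assoc]
  abel

end

theorem stmt9_general {n : ℕ} (p Sg S₀ : Matrix (Fin n) (Fin n) ℂ)
    (hSg : Sg ^ 2 + p = 0) (hunit : IsUnit (S₀ - Sg))
    (K : ℝ → Matrix (Fin n) (Fin n) ℂ)
    (hK : ∀ u : ℝ, K u =
      NormedSpace.exp (u • Sg) * (S₀ - Sg)⁻¹ * NormedSpace.exp (u • Sg)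
        + u • matE ((2 * u) • Sg))
    (S : ℝ → Matrix (Fin n) (Fin n) ℂ)
    (hS : ∀ u : ℝ, S u = Sg + (K u)⁻¹)
    (V : Set ℝ)
    (hinv : ∀ u ∈ V, IsUnit (K u)) :
    S 0 = S₀ ∧ ∀ u ∈ V, HasDerivAt S (-(S u ^ 2) - p) u := by
  have hKeq : K = sachsK Sg (S₀ - Sg)⁻¹ := funext hK
  have hSeq : S = fun v => Sg + Ring.inverse (K v) :=
    funext fun v => by rw [hS, nonsing_inv_eq_ringInverse]
  refine ⟨?_, fun u hu => ?_⟩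
  · rw [hS, hKeq, sachsK_zero, nonsing_inv_nonsing_inv _ ((isUnit_iff_isUnit_det _).mp hunit),
      add_sub_cancel]
  · have hK' : HasDerivAt K (Sg * K u + K u * Sg + 1) u := hKeq ▸ hasDerivAt_sachsK _ _ u
    rw [hSeq, eq_neg_of_add_eq_zero_right hSg]
    refine (hK'.riccati_const_add_ringInverse (hinv u hu)).congr_deriv ?_
    beta_reduce
    abel

/-- Let `Sigma` be a constant symmetric complex solution of `Sigma² + p = 0` and `S₀`
symmetric with `S₀ - Sigma` invertible.  Then
`S(u) = Sigma + [exp(u Sigma) (S₀ - Sigma)⁻¹ exp(u Sigma) + u E(2u Sigma)]⁻¹`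
solves the Sachs equation `S' + S² + p = 0` with `S(0) = S₀`, on a neighborhood of `0`
where the bracketed matrix is invertible. -/
theorem stmt9 {n : ℕ} (p Sg S₀ : Matrix (Fin n) (Fin n) ℂ)
    (hpsym : pᵀ = p) (hSgsym : Sgᵀ = Sg) (hS₀sym : S₀ᵀ = S₀)
    (hSg : Sg ^ 2 + p = 0) (hunit : IsUnit (S₀ - Sg))
    (K : ℝ → Matrix (Fin n) (Fin n) ℂ)
    (hK : ∀ u : ℝ, K u =
      NormedSpace.exp (u • Sg) * (S₀ - Sg)⁻¹ * NormedSpace.exp (u • Sg)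
        + u • matE ((2 * u) • Sg))
    (S : ℝ → Matrix (Fin n) (Fin n) ℂ)
    (hS : ∀ u : ℝ, S u = Sg + (K u)⁻¹)
    (V : Set ℝ) (hV : V ∈ nhds (0 : ℝ)) (hVopen : IsOpen V)
    (hinv : ∀ u ∈ V, IsUnit (K u)) :
    S 0 = S₀ ∧ ∀ u ∈ V, HasDerivAt S (-(S u ^ 2) - p) u :=
  stmt9_general p Sg S₀ hSg hunit K hK S hS V hinv
end
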